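/- Let k ≥ 1, a ∈ ℂ \ {0}, and let R: D → ℂ be a continuous function on a disk around 0 ∈ ℂ with R(0) = 0. Define f(z) = a·z^k + |z|^k·R(z). Then there exists ε > 0 such that f(z) ≠ 0 for all 0 < |z| ≤ ε, and the winding number of the loop t ↦ f(ε·e^{2πit}) around 0 equals k. -/

import Mathlib

/-!
For `z ≠ 0` write `a z^k + |z|^k R(z) = a z^k (1 + q(z))` with `q(z) = R(z) / (a (z/|z|)^k)`,
so `|q(z)| = |R(z)| / |a|`. Choose `ε` with `|R| < |a|` on the closed `ε`-disk: then `1 + q` takes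
values in the slit plane, where `arg` is continuous. Along the loop `γ(t) = ε e^{2πit}` the phase
`2πkt + arg a + arg (1 + q(γ t))` is therefore continuous, and since `γ 1 = γ 0` the last term
contributes nothing to the total change `2πk`.
-/

open Complex Metric

theorem exists_pos_lt_forall_norm_le_imp_norm_lt {E F : Type*} [SeminormedAddCommGroup E]
    [SeminormedAddCommGroup F] {R : E → F} {r c : ℝ} (hr : 0 < r)
    (hR : ContinuousOn R (ball 0 r)) (hR0 : R 0 = 0) (hc : 0 < c) :
    ∃ ε, 0 < ε ∧ ε < r ∧ ∀ z : E, ‖z‖ ≤ ε → ‖R z‖ < c := by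
  have hRc : ContinuousAt R 0 := hR.continuousAt (isOpen_ball.mem_nhds (mem_ball_self hr))
  have hsmall : ∀ᶠ z in nhds (0 : E), ‖R z‖ < c :=
    hRc.norm.eventually (gt_mem_nhds (by simpa [hR0] using hc))
  obtain ⟨δ, hδ, hδR⟩ := Metric.eventually_nhds_iff.mp hsmall
  refine ⟨min δ r / 2, by positivity, by linarith [min_le_right δ r], fun z hz => hδR ?_⟩
  rw [dist_zero_right]
  linarith [min_le_left δ r]

theorem Continuous.arg_of_mem_slitPlane {X : Type*} [TopologicalSpace X] {h : X → ℂ}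
    (hh : Continuous h) (hs : ∀ x, h x ∈ slitPlane) : Continuous fun x => arg (h x) :=
  continuous_iff_continuousAt.mpr fun x => (continuousAt_arg (hs x)).comp hh.continuousAt

theorem mul_pow_add_norm_pow_mul_eq (k : ℕ) {a z : ℂ} (w : ℂ) (ha : a ≠ 0) (hz : z ≠ 0) :
    a * z ^ k + (‖z‖ : ℂ) ^ k * w = a * z ^ k * (1 + w / (a * (z / ‖z‖) ^ k)) := by
  have : (‖z‖ : ℂ) ≠ 0 := by simpa using hz
  rw [div_pow]
  field_simp

theorem one_add_div_mul_div_norm_pow_mem_slitPlane (k : ℕ) {a z w : ℂ} (hz : z ≠ 0)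
    (hw : ‖w‖ < ‖a‖) : 1 + w / (a * (z / ‖z‖) ^ k) ∈ slitPlane := by
  refine mem_slitPlane_of_norm_lt_one ?_
  have ha : 0 < ‖a‖ := (norm_nonneg w).trans_lt hw
  simpa [hz, div_lt_one ha] using hw

theorem mul_pow_add_norm_pow_mul_ne_zero (k : ℕ) {a z w : ℂ} (ha : a ≠ 0) (hz : z ≠ 0)
    (hw : ‖w‖ < ‖a‖) : a * z ^ k + (‖z‖ : ℂ) ^ k * w ≠ 0 := by
  rw [mul_pow_add_norm_pow_mul_eq k w ha hz]
  exact mul_ne_zero (mul_ne_zero ha (pow_ne_zero k hz))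
    (slitPlane_ne_zero (one_add_div_mul_div_norm_pow_mem_slitPlane k hz hw))

theorem mul_circleMap_zero_pow_mul_eq_polar (k : ℕ) (a w : ℂ) (ε s : ℝ) :
    a * circleMap 0 ε s ^ k * w =
      ((ε ^ k * ‖a‖ * ‖w‖ : ℝ) : ℂ) * exp ((k * s + arg a + arg w : ℝ) * I) := by
  conv_lhs => rw [← norm_mul_exp_arg_mul_I a, ← norm_mul_exp_arg_mul_I w]
  rw [circleMap_zero_pow, circleMap_zero]
  push_cast
  rw [add_mul, add_mul, exp_add, exp_add]
  ring

theorem continuousOn_one_add_div_mul_div_norm_pow (k : ℕ) {a : ℂ} (ha : a ≠ 0)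
    {R : ℂ → ℂ} {s : Set ℂ} (hR : ContinuousOn R s) (hs : (0 : ℂ) ∉ s) :
    ContinuousOn (fun z => 1 + R z / (a * (z / ‖z‖) ^ k)) s := by
  have hne {z : ℂ} (hz : z ∈ s) : z ≠ 0 := fun h0 => hs (h0 ▸ hz)
  have hnorm {z : ℂ} (hz : z ∈ s) : (‖z‖ : ℂ) ≠ 0 := by simpa using hne hz
  have hsign : ContinuousOn (fun z : ℂ => a * (z / ‖z‖) ^ k) s :=
    continuousOn_const.mul ((continuousOn_id.div (by fun_prop : Continuous fun z : ℂ =>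
      (‖z‖ : ℂ)).continuousOn fun _ => hnorm).pow k)
  exact continuousOn_const.add (hR.div hsign fun _ hz =>
    mul_ne_zero ha (pow_ne_zero k (div_ne_zero (hne hz) (hnorm hz))))

theorem exists_polar_lift_mul_pow_circleMap (k : ℕ) {a : ℂ} (ha : a ≠ 0) {ε : ℝ}
    (hε : 0 < ε) {g : ℂ → ℂ} (hg : ContinuousOn g (sphere 0 ε))
    (hg_slit : ∀ z ∈ sphere 0 ε, g z ∈ slitPlane) :
    ∃ ρ θ : ℝ → ℝ, Continuous ρ ∧ Continuous θ ∧ (∀ t, 0 < ρ t) ∧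
      (∀ t : ℝ, a * circleMap 0 ε (2 * Real.pi * t) ^ k *
          g (circleMap 0 ε (2 * Real.pi * t)) =
        (ρ t : ℂ) * exp ((θ t : ℝ) * I)) ∧
      θ 1 - θ 0 = 2 * Real.pi * k := by
  set h : ℝ → ℂ := fun t => g (circleMap 0 ε (2 * Real.pi * t))
  have hh_slit (t : ℝ) : h t ∈ slitPlane := hg_slit _ (circleMap_mem_sphere 0 hε.le _)
  have hh_cont : Continuous h := hg.comp_continuous (by fun_prop) fun t =>
    circleMap_mem_sphere 0 hε.le _
  have hh_periodic : h 1 = h 0 := by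
    simpa [h] using congrArg g (periodic_circleMap 0 ε 0)
  refine ⟨fun t => ε ^ k * ‖a‖ * ‖h t‖,
    fun t => k * (2 * Real.pi * t) + arg a + arg (h t),
    by fun_prop, (by fun_prop : Continuous fun t : ℝ => k * (2 * Real.pi * t) + arg a).add
      (hh_cont.arg_of_mem_slitPlane hh_slit), fun t => ?_,
    fun t => mul_circleMap_zero_pow_mul_eq_polar k a (h t) ε _, ?_⟩
  · have := slitPlane_ne_zero (hh_slit t)
    positivity
  · simp only [hh_periodic]
    ring

theorem stmt12_general (k : ℕ) (a : ℂ) (ha : a ≠ 0)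
    (r : ℝ) (hr : 0 < r)
    (R : ℂ → ℂ) (hR : ContinuousOn R (Metric.ball 0 r)) (hR0 : R 0 = 0) :
    ∃ ε : ℝ, 0 < ε ∧ ε < r ∧
      (∀ z : ℂ, 0 < ‖z‖ → ‖z‖ ≤ ε →
        a * z ^ k + (‖z‖ : ℂ) ^ k * R z ≠ 0) ∧
      ∃ ρ θ : ℝ → ℝ, Continuous ρ ∧ Continuous θ ∧ (∀ t, 0 < ρ t) ∧
        (∀ t : ℝ,
          a * ((ε : ℂ) * Complex.exp ((2 * Real.pi * t : ℝ) * Complex.I)) ^ k +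
              (‖(ε : ℂ) * Complex.exp ((2 * Real.pi * t : ℝ) * Complex.I)‖ : ℂ) ^ k *
                R ((ε : ℂ) * Complex.exp ((2 * Real.pi * t : ℝ) * Complex.I)) =
            (ρ t : ℂ) * Complex.exp ((θ t : ℝ) * Complex.I)) ∧
        θ 1 - θ 0 = 2 * Real.pi * k := by
  obtain ⟨ε, hε, hεr, hR_lt⟩ :=
    exists_pos_lt_forall_norm_le_imp_norm_lt hr hR hR0 (norm_pos_iff.mpr ha)
  refine ⟨ε, hε, hεr, fun z hz hzε =>
    mul_pow_add_norm_pow_mul_ne_zero k ha (norm_pos_iff.mp hz) (hR_lt z hzε), ?_⟩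
  have hsphere_ne {z : ℂ} (hz : z ∈ sphere (0 : ℂ) ε) : z ≠ 0 :=
    ne_of_mem_sphere hz hε.ne'
  have hg := continuousOn_one_add_div_mul_div_norm_pow k ha
    (hR.mono (sphere_subset_closedBall.trans (closedBall_subset_ball hεr)))
    fun h0 => hsphere_ne h0 rfl
  obtain ⟨ρ, θ, hρ, hθ, hρ_pos, hpolar, hwind⟩ :=
    exists_polar_lift_mul_pow_circleMap k ha hε hg fun z hz =>
      one_add_div_mul_div_norm_pow_mem_slitPlane k (hsphere_ne hz)
        (hR_lt z (mem_sphere_zero_iff_norm.mp hz).le)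
  refine ⟨ρ, θ, hρ, hθ, hρ_pos, fun t => ?_, hwind⟩
  rw [← circleMap_zero, mul_pow_add_norm_pow_mul_eq k _ ha (circleMap_ne_center hε.ne'), hpolar]

/-- analytic core of Lemma 6.27. Let `k ≥ 1`, `a ∈ ℂ \ {0}`, and
`R` continuous on a disk of radius `r` around `0` with `R 0 = 0`.  Set
`f(z) = a·z^k + |z|^k·R(z)`.  Then there is `ε > 0` (with `ε < r`) such that
`f(z) ≠ 0` for all `0 < |z| ≤ ε`, and the winding number of the loop
`t ↦ f(ε·e^{2πit})` around `0` equals `k`: there is a continuous polar lift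
`f(ε e^{2πit}) = ρ(t)·e^{iθ(t)}` with `ρ > 0` and `θ(1) − θ(0) = 2πk`. -/
theorem stmt12 (k : ℕ) (hk : 1 ≤ k) (a : ℂ) (ha : a ≠ 0)
    (r : ℝ) (hr : 0 < r)
    (R : ℂ → ℂ) (hR : ContinuousOn R (Metric.ball 0 r)) (hR0 : R 0 = 0) :
    ∃ ε : ℝ, 0 < ε ∧ ε < r ∧
      (∀ z : ℂ, 0 < ‖z‖ → ‖z‖ ≤ ε →
        a * z ^ k + (‖z‖ : ℂ) ^ k * R z ≠ 0) ∧
      ∃ ρ θ : ℝ → ℝ, Continuous ρ ∧ Continuous θ ∧ (∀ t, 0 < ρ t) ∧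
        (∀ t : ℝ,
          a * ((ε : ℂ) * Complex.exp ((2 * Real.pi * t : ℝ) * Complex.I)) ^ k +
              (‖(ε : ℂ) * Complex.exp ((2 * Real.pi * t : ℝ) * Complex.I)‖ : ℂ) ^ k *
                R ((ε : ℂ) * Complex.exp ((2 * Real.pi * t : ℝ) * Complex.I)) =
            (ρ t : ℂ) * Complex.exp ((θ t : ℝ) * Complex.I)) ∧
        θ 1 - θ 0 = 2 * Real.pi * k :=
  stmt12_general k a ha r hr R hR hR0
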